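/- Let μ1, μ2 be nonzero real numbers and set μ3 = −μ1, μ4 = −μ2, and let θ2 ∈ (0, 2π) with θ2 ≠ π. Then (0, θ2, π, θ2 + π) is a critical point of V if and only if θ2 ∈ {π/4, 3π/4, 5π/4, 7π/4}. (With pairs of opposite circulations, the only rectangular configurations have each pair on a line, at an angle of π/4 from each other.) -/

import Mathlib

open Real Polynomial

/-- The potential `V` for the (1+4)-vortex problem with circulation
parameters `μ` and angular positions `θ`. -/
noncomputable def V (μ θ : Fin 4 → ℝ) : ℝ :=
  -∑ i : Fin 4, ∑ j ∈ Finset.Ioi i,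
      μ i * μ j *
        (Real.cos (θ i - θ j) + (1 / 2) * Real.log (2 - 2 * Real.cos (θ i - θ j)))

/-- The partial derivative `∂V/∂θ_k` at the point `θ`. -/
noncomputable def partialV (μ θ : Fin 4 → ℝ) (k : Fin 4) : ℝ :=
  deriv (fun t => V μ (Function.update θ k t)) (θ k)

/-- `θ` is a critical point of `V`: all four partial derivatives vanish. -/
def IsCriticalPt (μ θ : Fin 4 → ℝ) : Prop :=
  ∀ k : Fin 4, partialV μ θ k = 0

/-- The Hessian matrix of `V` at `θ`, `H k l = ∂²V/∂θ_k ∂θ_l`. -/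
noncomputable def hessV (μ θ : Fin 4 → ℝ) : Matrix (Fin 4) (Fin 4) ℝ :=
  fun k l => deriv (fun t => partialV μ (Function.update θ k t) l) (θ k)

/-!
Write `g x = cos x + ½ log (2 - 2 cos x)`. Up to constant diagonal terms,
`V = -½ ∑ᵢ ∑ⱼ μᵢ μⱼ g (θᵢ - θⱼ)` with `g` even, so `∂V/∂θₖ = -∑ⱼ μₖ μⱼ g' (θₖ - θⱼ)`. The derivative
`g' x = sin x ((2 - 2 cos x)⁻¹ - 1)` is odd and `2π`-periodic, so at the rectangle each partial
derivative collapses to `± μ₁ μ₂ (g' θ₂ - g' (θ₂ + π)) = ± μ₁ μ₂ cos 2θ₂ / sin θ₂`. Hence the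
rectangle is critical exactly when `cos 2θ₂ = 0`.
-/

noncomputable def pairPotential (x : ℝ) : ℝ := cos x + (1 / 2) * log (2 - 2 * cos x)

noncomputable def pairPotentialDeriv (x : ℝ) : ℝ := sin x * ((2 - 2 * cos x)⁻¹ - 1)

theorem hasDerivAt_pairPotential {x : ℝ} (hx : cos x ≠ 1) :
    HasDerivAt pairPotential (pairPotentialDeriv x) x := by
  have hne : 2 - 2 * cos x ≠ 0 := fun h => hx (by linarith)
  have hlog : HasDerivAt (fun y => log (2 - 2 * cos y)) (2 * sin x / (2 - 2 * cos x)) x := by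
    simpa using (((hasDerivAt_cos x).const_mul 2).const_sub 2).log hne
  refine ((hasDerivAt_cos x).add (hlog.const_mul (1 / 2))).congr_deriv ?_
  simp only [pairPotentialDeriv]
  field_simp
  ring

theorem pairPotential_sub_comm (a b : ℝ) : pairPotential (a - b) = pairPotential (b - a) := by
  rw [← neg_sub, pairPotential, pairPotential, cos_neg]

theorem pairPotentialDeriv_neg (x : ℝ) : pairPotentialDeriv (-x) = -pairPotentialDeriv x := by
  simp [pairPotentialDeriv]

theorem pairPotentialDeriv_zero : pairPotentialDeriv 0 = 0 := by
  simp [pairPotentialDeriv]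

theorem pairPotentialDeriv_pi : pairPotentialDeriv π = 0 := by
  simp [pairPotentialDeriv]

theorem pairPotentialDeriv_sub_pi (x : ℝ) :
    pairPotentialDeriv (x - π) = pairPotentialDeriv (x + π) := by
  simp [pairPotentialDeriv, sin_sub_pi, cos_sub_pi, sin_add_pi, cos_add_pi]

theorem pairPotentialDeriv_pi_sub (x : ℝ) :
    pairPotentialDeriv (π - x) = -pairPotentialDeriv (x + π) := by
  rw [← neg_sub, pairPotentialDeriv_neg, pairPotentialDeriv_sub_pi]

theorem cos_two_mul_div_sin_eq {x : ℝ} (hx : sin x ≠ 0) :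
    cos (2 * x) / sin x = pairPotentialDeriv x - pairPotentialDeriv (x + π) := by
  have hc1 : 1 - cos x ≠ 0 := by
    intro h; apply hx; rw [sin_eq_zero_iff_cos_eq]; left; linarith
  have hc2 : 1 + cos x ≠ 0 := by
    intro h; apply hx; rw [sin_eq_zero_iff_cos_eq]; right; linarith
  simp only [pairPotentialDeriv, sin_add_pi, cos_add_pi, cos_two_mul, mul_neg, sub_neg_eq_add]
  rw [div_eq_iff hx]
  field_simp
  linear_combination (2 - 4 * cos x ^ 2) * sin_sq_add_cos_sq x

theorem V_eq_double_sum (μ θ : Fin 4 → ℝ) :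
    V μ θ = (∑ i, μ i ^ 2 * pairPotential 0 - ∑ i, ∑ j, μ i * μ j * pairPotential (θ i - θ j)) / 2 := by
  have h0 : Finset.Ioi (0 : Fin 4) = {1, 2, 3} := by decide
  have h1 : Finset.Ioi (1 : Fin 4) = {2, 3} := by decide
  have h2 : Finset.Ioi (2 : Fin 4) = {3} := by decide
  have h3 : Finset.Ioi (3 : Fin 4) = ∅ := by decide
  change -∑ i, ∑ j ∈ Finset.Ioi i, μ i * μ j * pairPotential (θ i - θ j) = _
  simp only [Fin.sum_univ_four, Fin.isValue, h0, h1, h2, h3, Finset.mem_insert, Fin.reduceEq,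
    Finset.mem_singleton, or_self, not_false_eq_true, Finset.sum_insert, Finset.sum_singleton,
    Finset.sum_empty, add_zero, neg_add_rev, sub_self]
  rw [pairPotential_sub_comm (θ 1) (θ 0), pairPotential_sub_comm (θ 2) (θ 0),
    pairPotential_sub_comm (θ 3) (θ 0), pairPotential_sub_comm (θ 2) (θ 1),
    pairPotential_sub_comm (θ 3) (θ 1), pairPotential_sub_comm (θ 3) (θ 2)]
  ring

theorem hasDerivAt_pairPotential_update {ι : Type*} [DecidableEq ι] {θ : ι → ℝ} {k : ι}
    (hk : ∀ j ≠ k, cos (θ k - θ j) ≠ 1) (i j : ι) :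
    HasDerivAt (fun t => pairPotential (Function.update θ k t i - Function.update θ k t j))
      ((if i = k then pairPotentialDeriv (θ k - θ j) else 0) -
        if j = k then pairPotentialDeriv (θ i - θ k) else 0) (θ k) := by
  by_cases hi : i = k <;> by_cases hj : j = k
  · subst hi hj
    simpa using hasDerivAt_const _ (pairPotential 0)
  · subst hi
    simpa [hj] using (hasDerivAt_pairPotential (hk j hj)).comp_sub_const (θ i) (θ j)
  · subst hj
    have h : cos (θ i - θ j) ≠ 1 := by rw [← cos_neg, neg_sub]; exact hk i hi
    simpa [hi] using (hasDerivAt_pairPotential h).comp_const_sub (θ i) (θ j)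
  · simpa [hi, hj] using hasDerivAt_const (θ k) (pairPotential (θ i - θ j))

theorem partialV_eq_sum {μ θ : Fin 4 → ℝ} {k : Fin 4} (hk : ∀ j ≠ k, cos (θ k - θ j) ≠ 1) :
    partialV μ θ k = -∑ j, μ k * μ j * pairPotentialDeriv (θ k - θ j) := by
  have hS : HasDerivAt
      (fun t => ∑ i, ∑ j, μ i * μ j * pairPotential (Function.update θ k t i - Function.update θ k t j))
      (∑ i, ∑ j, μ i * μ j * ((if i = k then pairPotentialDeriv (θ k - θ j) else 0) -
        if j = k then pairPotentialDeriv (θ i - θ k) else 0)) (θ k) :=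
    HasDerivAt.fun_sum fun i _ => HasDerivAt.fun_sum fun j _ =>
      (hasDerivAt_pairPotential_update hk i j).const_mul _
  rw [partialV]
  simp only [V_eq_double_sum]
  rw [((hS.const_sub _).div_const 2).deriv]
  simp only [mul_sub, mul_ite, mul_zero, Finset.sum_sub_distrib, Finset.sum_ite_irrel,
    Finset.sum_const_zero, Finset.sum_ite_eq', Finset.mem_univ, if_true]
  have hswap (j : Fin 4) : μ j * μ k * pairPotentialDeriv (θ j - θ k) =
      -(μ k * μ j * pairPotentialDeriv (θ k - θ j)) := by
    rw [← neg_sub (θ k), pairPotentialDeriv_neg]; ring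
  simp only [hswap, Finset.sum_neg_distrib]
  ring

theorem cos_sub_ne_one_rectangle {θ2 : ℝ} (hs : sin θ2 ≠ 0) {k : Fin 4} :
    ∀ j ≠ k, cos (![0, θ2, π, θ2 + π] k - ![0, θ2, π, θ2 + π] j) ≠ 1 := by
  obtain ⟨hc1, hc2⟩ : cos θ2 ≠ 1 ∧ cos θ2 ≠ -1 := by
    simpa [not_or] using mt sin_eq_zero_iff_cos_eq.mpr hs
  intro j hj
  fin_cases k <;> fin_cases j <;>
    norm_num [cos_add_pi, cos_sub_pi, neg_eq_iff_eq_neg, hc1, hc2, -neg_add_rev] at *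

theorem partialV_rectangle {μ1 μ2 θ2 : ℝ} (hs : sin θ2 ≠ 0) (k : Fin 4) :
    partialV ![μ1, μ2, -μ1, -μ2] ![0, θ2, π, θ2 + π] k =
      ![1, -1, 1, -1] k * μ1 * μ2 * (cos (2 * θ2) / sin θ2) := by
  rw [partialV_eq_sum (cos_sub_ne_one_rectangle hs), cos_two_mul_div_sin_eq hs]
  fin_cases k <;>
    simp only [Fin.sum_univ_four, Fin.isValue, Fin.zero_eta, Fin.mk_one, Fin.reduceFinMk,
      Matrix.cons_val_zero, Matrix.cons_val_one, Matrix.cons_val, Nat.succ_eq_add_one, Nat.reduceAdd,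
      sub_zero, zero_sub, sub_self, sub_add_cancel_left, sub_add_cancel_right, add_sub_cancel_left,
      add_sub_cancel_right, pairPotentialDeriv_zero, pairPotentialDeriv_pi, pairPotentialDeriv_neg,
      pairPotentialDeriv_sub_pi]
  · ring
  · ring
  · rw [pairPotentialDeriv_pi_sub]; ring
  · ring

theorem sin_ne_zero_of_mem_Ioo_of_ne_pi {x : ℝ} (hx : x ∈ Set.Ioo 0 (2 * π)) (hxπ : x ≠ π) :
    sin x ≠ 0 := by
  have h := sin_eq_zero_iff_of_lt_of_lt (x := x - π) (by linarith [hx.1]) (by linarith [hx.2])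
  rw [sin_sub_pi, neg_eq_zero, sub_eq_zero] at h
  exact h.not.mpr hxπ

theorem cos_two_mul_eq_zero_iff_of_mem_Ioo {x : ℝ} (hx : x ∈ Set.Ioo 0 (2 * π)) :
    cos (2 * x) = 0 ↔ x ∈ ({π / 4, 3 * π / 4, 5 * π / 4, 7 * π / 4} : Set ℝ) := by
  rw [cos_eq_zero_iff]
  simp only [Set.mem_insert_iff, Set.mem_singleton_iff]
  constructor
  · rintro ⟨n, hn⟩
    obtain rfl : x = (2 * n + 1) * π / 4 := by linarith
    have h0 : (0 : ℝ) < 2 * n + 1 := by nlinarith [pi_pos, hx.1]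
    have h8 : (2 * n + 1 : ℝ) < 8 := by nlinarith [pi_pos, hx.2]
    have : n = 0 ∨ n = 1 ∨ n = 2 ∨ n = 3 := by
      have h0' : (0 : ℤ) < 2 * n + 1 := by exact_mod_cast h0
      have h8' : (2 * n + 1 : ℤ) < 8 := by exact_mod_cast h8
      omega
    rcases this with rfl | rfl | rfl | rfl <;> norm_num
  · rintro (rfl | rfl | rfl | rfl)
    exacts [⟨0, by ring⟩, ⟨1, by ring⟩, ⟨2, by ring⟩, ⟨3, by ring⟩]

/-- With pairs of opposite circulations, the only rectangular configurations
have `theta2` in `{pi/4, 3pi/4, 5pi/4, 7pi/4}`. -/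
theorem rectangle_opposite_pairs (μ1 μ2 θ2 : ℝ)
    (h1 : μ1 ≠ 0) (h2 : μ2 ≠ 0)
    (hθ : θ2 ∈ Set.Ioo (0 : ℝ) (2 * π)) (hθπ : θ2 ≠ π) :
    IsCriticalPt ![μ1, μ2, -μ1, -μ2] ![0, θ2, π, θ2 + π] ↔
      θ2 ∈ ({π / 4, 3 * π / 4, 5 * π / 4, 7 * π / 4} : Set ℝ) := by
  have hs := sin_ne_zero_of_mem_Ioo_of_ne_pi hθ hθπ
  rw [← cos_two_mul_eq_zero_iff_of_mem_Ioo hθ, IsCriticalPt]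
  simp only [partialV_rectangle hs]
  constructor
  · intro h
    simpa [h1, h2, hs] using h 0
  · intro h k
    simp [h]
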